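/- arXiv:1012.0579 — 4 statements merged into one kernel-verified Lean document; each statement's English description precedes it below -/
import Mathlib

section
/- Let a ∈ (-1,1) and let φ : (0,∞) → ℝ be a C² solution of the ODE -φ(y) + (a/y)·φ'(y) + φ''(y) = 0 with φ(0⁺)=1, φ(∞)=0, such that all the integrals below converge. Then (a+3)·∫₀^∞ t^{a+2} φ(t)² dt = (3-a)·∫₀^∞ t^{a+2} φ'(t)² dt. -/
/-!
Integrate by parts twice against the weight `t ^ (a + 3)`: the identity
`(p + 1) ∫ t^p ψ² = -2 ∫ t^(p+1) ψ ψ'`, applied to `ψ = φ` and `ψ = φ'`, relates the two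
weighted energies to `∫ t^(a+3) φ φ'` and `∫ t^(a+3) φ' φ''`, and the ODE
`φ'' = φ - (a / t) φ'` expresses the second of these through the first and `∫ t^(a+2) φ'²`.
Both sides of the identity then equal `-2 ∫ t^(a+3) φ φ'`.
-/

open Set Filter MeasureTheory Topology

theorem integral_rpow_mul_sq_eq_neg_two_mul {ψ ψ' : ℝ → ℝ} {p : ℝ}
    (hψ : ∀ x ∈ Ioi (0 : ℝ), HasDerivAt ψ (ψ' x) x)
    (hint : IntegrableOn (fun t => t ^ p * ψ t ^ 2) (Ioi 0))
    (hint' : IntegrableOn (fun t => t ^ (p + 1) * ψ t * ψ' t) (Ioi 0))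
    (hzero : Tendsto (fun t => t ^ (p + 1) * ψ t ^ 2) (𝓝[>] 0) (𝓝 0))
    (htop : Tendsto (fun t => t ^ (p + 1) * ψ t ^ 2) atTop (𝓝 0)) :
    (p + 1) * ∫ t in Ioi 0, t ^ p * ψ t ^ 2 = -2 * ∫ t in Ioi 0, t ^ (p + 1) * ψ t * ψ' t := by
  have hpow : ∀ x ∈ Ioi (0 : ℝ), HasDerivAt (fun t => t ^ (p + 1)) ((p + 1) * x ^ p) x :=
    fun x hx => by simpa using Real.hasDerivAt_rpow_const (p := p + 1) (Or.inl hx.ne')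
  have hsq : ∀ x ∈ Ioi (0 : ℝ), HasDerivAt (fun t => ψ t ^ 2) (2 * ψ x * ψ' x) x :=
    fun x hx => by simpa using (hψ x hx).fun_pow 2
  have hibp : ∫ t in Ioi 0, (p + 1) * (t ^ p * ψ t ^ 2) + 2 * (t ^ (p + 1) * ψ t * ψ' t)
      = 0 - 0 := by
    rw [← integral_Ioi_deriv_mul_eq_sub hpow hsq ?_ hzero htop]
    · exact integral_congr_ae (ae_of_all _ fun t => by ring)
    · exact IntegrableOn.congr_fun ((hint.const_mul (p + 1)).add (hint'.const_mul 2))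
        (fun t _ => by simp only [Pi.add_apply, Pi.mul_apply]; ring) measurableSet_Ioi
  rw [integral_add (hint.const_mul _) (hint'.const_mul _), integral_const_mul,
    integral_const_mul] at hibp
  linarith

theorem integral_rpow_mul_mul_of_ode {φ φ' φ'' : ℝ → ℝ} {a p : ℝ}
    (hode : ∀ y ∈ Ioi (0 : ℝ), -φ y + (a / y) * φ' y + φ'' y = 0)
    (hint : IntegrableOn (fun t => t ^ p * φ' t ^ 2) (Ioi 0))
    (hint' : IntegrableOn (fun t => t ^ (p + 1) * φ t * φ' t) (Ioi 0)) :
    ∫ t in Ioi 0, t ^ (p + 1) * φ' t * φ'' t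
      = (∫ t in Ioi 0, t ^ (p + 1) * φ t * φ' t) - a * ∫ t in Ioi 0, t ^ p * φ' t ^ 2 := by
  rw [← integral_const_mul, ← integral_sub hint' (hint.const_mul a)]
  refine setIntegral_congr_fun measurableSet_Ioi fun t (ht : 0 < t) => ?_
  have hφ'' : φ'' t = φ t - (a / t) * φ' t := by linarith [hode t ht]
  rw [hφ'', Real.rpow_add_one ht.ne']
  field_simp

theorem stmt0_general (a : ℝ)
    (φ : ℝ → ℝ) (hφ : ContDiffOn ℝ 2 φ (Set.Ioi 0))
    (hODE : ∀ y ∈ Set.Ioi (0 : ℝ),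
      -φ y + (a / y) * deriv φ y + deriv (deriv φ) y = 0)
    (hi1 : IntegrableOn (fun t => t ^ (a + 2) * (φ t) ^ 2) (Set.Ioi 0))
    (hi2 : IntegrableOn (fun t => t ^ (a + 2) * (deriv φ t) ^ 2) (Set.Ioi 0))
    (hi3 : IntegrableOn (fun t => t ^ (a + 3) * φ t * deriv φ t) (Set.Ioi 0))
    (hi4 : IntegrableOn (fun t => t ^ (a + 3) * deriv φ t * deriv (deriv φ) t) (Set.Ioi 0))
    (hb1 : Tendsto (fun t => t ^ (a + 3) * (φ t) ^ 2) (nhdsWithin 0 (Set.Ioi 0)) (nhds 0))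
    (hb2 : Tendsto (fun t => t ^ (a + 3) * (φ t) ^ 2) atTop (nhds 0))
    (hb3 : Tendsto (fun t => t ^ (a + 3) * (deriv φ t) ^ 2) (nhdsWithin 0 (Set.Ioi 0)) (nhds 0))
    (hb4 : Tendsto (fun t => t ^ (a + 3) * (deriv φ t) ^ 2) atTop (nhds 0)) :
    (a + 3) * ∫ t in Set.Ioi (0 : ℝ), t ^ (a + 2) * (φ t) ^ 2
      = (3 - a) * ∫ t in Set.Ioi (0 : ℝ), t ^ (a + 2) * (deriv φ t) ^ 2 := by
  have hasDerivAt_of_contDiffOn : ∀ {f : ℝ → ℝ}, ContDiffOn ℝ 1 f (Ioi 0) →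
      ∀ x ∈ Ioi (0 : ℝ), HasDerivAt f (deriv f x) x := fun hf x hx =>
    ((hf.differentiableOn one_ne_zero).differentiableAt (isOpen_Ioi.mem_nhds hx)).hasDerivAt
  have hφ' := hasDerivAt_of_contDiffOn (hφ.of_le one_le_two)
  have hφ'' := hasDerivAt_of_contDiffOn (hφ.deriv_of_isOpen isOpen_Ioi le_rfl)
  rw [show a + 3 = a + 2 + 1 by ring] at hi3 hi4 hb1 hb2 hb3 hb4 ⊢
  have hφ_energy := integral_rpow_mul_sq_eq_neg_two_mul hφ' hi1 hi3 hb1 hb2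
  have hφ'_energy := integral_rpow_mul_sq_eq_neg_two_mul hφ'' hi2 hi4 hb3 hb4
  have hode := integral_rpow_mul_mul_of_ode hODE hi2 hi3
  linarith

/-- Integration-by-parts identity for the Caffarelli–Silvestre profile:
`(a+3)·∫ t^{a+2} φ² = (3-a)·∫ t^{a+2} (φ')²`. -/
theorem stmt0 (a : ℝ) (ha : a ∈ Set.Ioo (-1 : ℝ) 1)
    (φ : ℝ → ℝ) (hφ : ContDiffOn ℝ 2 φ (Set.Ioi 0))
    (hODE : ∀ y ∈ Set.Ioi (0 : ℝ),
      -φ y + (a / y) * deriv φ y + deriv (deriv φ) y = 0)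
    (h0 : Tendsto φ (nhdsWithin 0 (Set.Ioi 0)) (nhds 1))
    (hinf : Tendsto φ atTop (nhds 0))
    (hi1 : IntegrableOn (fun t => t ^ (a + 2) * (φ t) ^ 2) (Set.Ioi 0))
    (hi2 : IntegrableOn (fun t => t ^ (a + 2) * (deriv φ t) ^ 2) (Set.Ioi 0))
    (hi3 : IntegrableOn (fun t => t ^ (a + 3) * φ t * deriv φ t) (Set.Ioi 0))
    (hi4 : IntegrableOn (fun t => t ^ (a + 3) * deriv φ t * deriv (deriv φ) t) (Set.Ioi 0))
    (hb1 : Tendsto (fun t => t ^ (a + 3) * (φ t) ^ 2) (nhdsWithin 0 (Set.Ioi 0)) (nhds 0))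
    (hb2 : Tendsto (fun t => t ^ (a + 3) * (φ t) ^ 2) atTop (nhds 0))
    (hb3 : Tendsto (fun t => t ^ (a + 3) * (deriv φ t) ^ 2) (nhdsWithin 0 (Set.Ioi 0)) (nhds 0))
    (hb4 : Tendsto (fun t => t ^ (a + 3) * (deriv φ t) ^ 2) atTop (nhds 0)) :
    (a + 3) * ∫ t in Set.Ioi (0 : ℝ), t ^ (a + 2) * (φ t) ^ 2
      = (3 - a) * ∫ t in Set.Ioi (0 : ℝ), t ^ (a + 2) * (deriv φ t) ^ 2 :=
  stmt0_general a φ hφ hODE hi1 hi2 hi3 hi4 hb1 hb2 hb3 hb4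
end

section
/- Let a ∈ (-1,1) and let φ : (0,∞) → ℝ solve -φ(y) + (a/y)·φ'(y) + φ''(y) = 0 with φ(0⁺)=1, φ(∞)=0 and all relevant integrals finite. Define d₁ = ∫₀^∞ t^{a+2}(φ(t)² + φ'(t)²) dt and d₃ = ∫₀^∞ t^a φ(t)² dt. Then d₁ = (a+1)·d₃. -/
/-!
Both `u = t^{a+1} φ²` and `v = t^{a+2} φ φ'` are integrable on `(0, ∞)`, have integrable
derivatives and vanish at `0⁺`, so `∫ u' = ∫ v' = 0`. Now
`u' = (a+1) t^a φ² + 2 t^{a+1} φ φ'`, and the equation `φ'' = φ - (a/t) φ'` gives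
`v' = t^{a+2} (φ² + φ'²) + 2 t^{a+1} φ φ'`; hence `d₁` and `(a+1) d₃` both equal
`-2 ∫ t^{a+1} φ φ'`.
-/

open Set Filter MeasureTheory Topology

theorem integral_Ioi_deriv_eq_zero {E : Type*} [NormedAddCommGroup E] [NormedSpace ℝ E]
    [CompleteSpace E] {f f' : ℝ → E} {a : ℝ}
    (hderiv : ∀ x ∈ Ioi a, HasDerivAt f (f' x) x) (f'int : IntegrableOn f' (Ioi a))
    (fint : IntegrableOn f (Ioi a)) (h_zero : Tendsto f (𝓝[>] a) (𝓝 0)) :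
    ∫ x in Ioi a, f' x = 0 := by
  -- the value `f a` plays no role in the integral, so redefine it as the right limit
  set g := Function.update f a 0
  have hgderiv : ∀ x ∈ Ioi a, HasDerivAt g (f' x) x := fun x (hx : a < x) ↦
    (hderiv x hx).congr_of_eventuallyEq <| by
      filter_upwards [eventually_ne_nhds hx.ne'] with y hy
      exact Function.update_of_ne hy 0 f
  have hg_top : Tendsto g atTop (𝓝 0) :=
    (tendsto_zero_of_hasDerivAt_of_integrableOn_Ioi hderiv f'int fint).congr' <| by
      filter_upwards [eventually_ne_atTop a] with x hx
      exact (Function.update_of_ne hx 0 f).symm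
  rw [← Ici_sdiff_left] at h_zero
  simpa [g] using integral_Ioi_of_hasDerivAt_of_tendsto
    (continuousWithinAt_update_same.mpr h_zero) hgderiv f'int hg_top

theorem two_mul_rpow_add_one_le {t : ℝ} (ht : 0 < t) (a : ℝ) :
    2 * t ^ (a + 1) ≤ t ^ (a + 2) + t ^ a := by
  rw [Real.rpow_add ht, Real.rpow_add ht, Real.rpow_one, Real.rpow_two]
  nlinarith [mul_nonneg (Real.rpow_pos_of_pos ht a).le (sq_nonneg (t - 1))]

section WeightedIdentities

variable {a : ℝ} {φ : ℝ → ℝ}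

theorem integrableOn_rpow_mul_sq (hφ : ContinuousOn φ (Ioi 0))
    (hi1 : IntegrableOn (fun t => t ^ (a + 2) * ((φ t) ^ 2 + (deriv φ t) ^ 2)) (Ioi 0))
    (hi2 : IntegrableOn (fun t => t ^ a * (φ t) ^ 2) (Ioi 0)) :
    IntegrableOn (fun t => t ^ (a + 1) * (φ t) ^ 2) (Ioi 0) := by
  refine ((hi1.add hi2).div_const 2).mono' ?_ ?_
  · exact ContinuousOn.aestronglyMeasurable (by fun_prop (disch := grind)) measurableSet_Ioi
  · filter_upwards [ae_restrict_mem measurableSet_Ioi] with t (ht : 0 < t)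
    rw [Real.norm_of_nonneg (by positivity), Pi.add_apply]
    nlinarith [mul_le_mul_of_nonneg_right (two_mul_rpow_add_one_le ht a) (sq_nonneg (φ t)),
      mul_nonneg (Real.rpow_pos_of_pos ht (a + 2)).le (sq_nonneg (deriv φ t))]

theorem integrableOn_rpow_mul_mul_deriv (hφ : ContinuousOn φ (Ioi 0))
    (hφ' : ContinuousOn (deriv φ) (Ioi 0))
    (hi1 : IntegrableOn (fun t => t ^ (a + 2) * ((φ t) ^ 2 + (deriv φ t) ^ 2)) (Ioi 0)) :
    IntegrableOn (fun t => t ^ (a + 2) * φ t * deriv φ t) (Ioi 0) := by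
  refine (hi1.div_const 2).mono' ?_ ?_
  · exact ContinuousOn.aestronglyMeasurable (by fun_prop (disch := grind)) measurableSet_Ioi
  · filter_upwards [ae_restrict_mem measurableSet_Ioi] with t (ht : 0 < t)
    have hw := Real.rpow_pos_of_pos ht (a + 2)
    rw [Real.norm_eq_abs, abs_le]
    constructor <;> nlinarith [mul_nonneg hw.le (sq_nonneg (φ t + deriv φ t)),
      mul_nonneg hw.le (sq_nonneg (φ t - deriv φ t))]

theorem hasDerivAt_rpow_mul_sq {t : ℝ} (ht : 0 < t) (hφ : DifferentiableAt ℝ φ t) :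
    HasDerivAt (fun t => t ^ (a + 1) * (φ t) ^ 2)
      ((a + 1) * (t ^ a * (φ t) ^ 2) + 2 * (t ^ (a + 1) * φ t * deriv φ t)) t := by
  refine ((Real.hasDerivAt_rpow_const (p := a + 1) (Or.inl ht.ne')).mul
    (hφ.hasDerivAt.pow 2)).congr_deriv ?_
  rw [add_sub_cancel_right, Pi.pow_apply]
  ring

theorem hasDerivAt_rpow_mul_mul_deriv {t : ℝ} (ht : 0 < t) (hφ : DifferentiableAt ℝ φ t)
    (hφ' : DifferentiableAt ℝ (deriv φ) t)
    (hODE : -φ t + (a / t) * deriv φ t + deriv (deriv φ) t = 0) :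
    HasDerivAt (fun t => t ^ (a + 2) * φ t * deriv φ t)
      (t ^ (a + 2) * ((φ t) ^ 2 + (deriv φ t) ^ 2) + 2 * (t ^ (a + 1) * φ t * deriv φ t)) t := by
  refine (((Real.hasDerivAt_rpow_const (p := a + 2) (Or.inl ht.ne')).mul
    hφ.hasDerivAt).mul hφ'.hasDerivAt).congr_deriv ?_
  have hφ'' : deriv (deriv φ) t = φ t - (a / t) * deriv φ t := by linarith
  have hw : t ^ (a + 2) = t ^ (a + 1) * t := by
    rw [show a + 2 = a + 1 + 1 by ring, Real.rpow_add_one ht.ne' (a + 1)]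
  simp only [Pi.mul_apply]
  rw [hφ'', show a + 2 - 1 = a + 1 by ring, hw]
  field_simp
  ring

theorem tendsto_rpow_mul_sq_nhdsGT_zero (ha : -1 < a) {c : ℝ}
    (h0 : Tendsto φ (𝓝[>] 0) (𝓝 c)) :
    Tendsto (fun t => t ^ (a + 1) * (φ t) ^ 2) (𝓝[>] 0) (𝓝 0) := by
  have hw : Tendsto (fun t : ℝ => t ^ (a + 1)) (𝓝[>] 0) (𝓝 0) := by
    simpa [Real.zero_rpow (by linarith : a + 1 ≠ 0)] using
      ((Real.continuousAt_rpow_const 0 (a + 1) (Or.inr (by linarith))).tendsto.mono_left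
        nhdsWithin_le_nhds)
  simpa using hw.mul (h0.pow 2)

theorem tendsto_rpow_mul_mul_deriv_nhdsGT_zero
    (hb1 : Tendsto (fun t => t ^ (a + 1) * φ t * deriv φ t) (𝓝[>] 0) (𝓝 0)) :
    Tendsto (fun t => t ^ (a + 2) * φ t * deriv φ t) (𝓝[>] 0) (𝓝 0) := by
  have := (tendsto_nhdsWithin_of_tendsto_nhds (tendsto_id (x := 𝓝 (0 : ℝ)))).mul hb1
  simp only [id_eq, zero_mul] at this
  refine this.congr' ?_
  filter_upwards [self_mem_nhdsWithin] with t (ht : 0 < t)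
  rw [show a + 2 = a + 1 + 1 by ring, Real.rpow_add_one ht.ne' (a + 1)]
  ring

theorem integral_rpow_mul_sq_eq (ha : -1 < a) (hφ : DifferentiableOn ℝ φ (Ioi 0)) {c : ℝ}
    (h0 : Tendsto φ (𝓝[>] 0) (𝓝 c))
    (hi1 : IntegrableOn (fun t => t ^ (a + 2) * ((φ t) ^ 2 + (deriv φ t) ^ 2)) (Ioi 0))
    (hi2 : IntegrableOn (fun t => t ^ a * (φ t) ^ 2) (Ioi 0))
    (hi3 : IntegrableOn (fun t => t ^ (a + 1) * φ t * deriv φ t) (Ioi 0)) :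
    (a + 1) * ∫ t in Ioi 0, t ^ a * (φ t) ^ 2
      = -2 * ∫ t in Ioi 0, t ^ (a + 1) * φ t * deriv φ t := by
  have h := integral_Ioi_deriv_eq_zero
    (fun t ht ↦ hasDerivAt_rpow_mul_sq ht (hφ.differentiableAt (isOpen_Ioi.mem_nhds ht)))
    ((hi2.const_mul _).add (hi3.const_mul 2)) (integrableOn_rpow_mul_sq hφ.continuousOn hi1 hi2)
    (tendsto_rpow_mul_sq_nhdsGT_zero ha h0)
  rw [integral_add (hi2.const_mul _) (hi3.const_mul 2), integral_const_mul,
    integral_const_mul] at h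
  linarith

theorem integral_rpow_mul_sq_add_sq_eq (hφ : DifferentiableOn ℝ φ (Ioi 0))
    (hφ' : DifferentiableOn ℝ (deriv φ) (Ioi 0))
    (hODE : ∀ y ∈ Ioi (0 : ℝ), -φ y + (a / y) * deriv φ y + deriv (deriv φ) y = 0)
    (hi1 : IntegrableOn (fun t => t ^ (a + 2) * ((φ t) ^ 2 + (deriv φ t) ^ 2)) (Ioi 0))
    (hi3 : IntegrableOn (fun t => t ^ (a + 1) * φ t * deriv φ t) (Ioi 0))
    (hb1 : Tendsto (fun t => t ^ (a + 1) * φ t * deriv φ t) (𝓝[>] 0) (𝓝 0)) :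
    ∫ t in Ioi 0, t ^ (a + 2) * ((φ t) ^ 2 + (deriv φ t) ^ 2)
      = -2 * ∫ t in Ioi 0, t ^ (a + 1) * φ t * deriv φ t := by
  have h := integral_Ioi_deriv_eq_zero
    (fun t ht ↦ hasDerivAt_rpow_mul_mul_deriv ht
      (hφ.differentiableAt (isOpen_Ioi.mem_nhds ht))
      (hφ'.differentiableAt (isOpen_Ioi.mem_nhds ht)) (hODE t ht))
    (hi1.add (hi3.const_mul 2))
    (integrableOn_rpow_mul_mul_deriv hφ.continuousOn hφ'.continuousOn hi1)
    (tendsto_rpow_mul_mul_deriv_nhdsGT_zero hb1)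
  rw [integral_add hi1 (hi3.const_mul 2), integral_const_mul] at h
  linarith

end WeightedIdentities

theorem stmt1_general (a : ℝ) (ha : a ∈ Set.Ioo (-1 : ℝ) 1)
    (φ : ℝ → ℝ) (hφ : ContDiffOn ℝ 2 φ (Set.Ioi 0))
    (hODE : ∀ y ∈ Set.Ioi (0 : ℝ),
      -φ y + (a / y) * deriv φ y + deriv (deriv φ) y = 0)
    (h0 : Tendsto φ (nhdsWithin 0 (Set.Ioi 0)) (nhds 1))
    (hi1 : IntegrableOn (fun t => t ^ (a + 2) * ((φ t) ^ 2 + (deriv φ t) ^ 2)) (Set.Ioi 0))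
    (hi2 : IntegrableOn (fun t => t ^ a * (φ t) ^ 2) (Set.Ioi 0))
    (hi3 : IntegrableOn (fun t => t ^ (a + 1) * φ t * deriv φ t) (Set.Ioi 0))
    (hb1 : Tendsto (fun t => t ^ (a + 1) * φ t * deriv φ t) (nhdsWithin 0 (Set.Ioi 0)) (nhds 0)) :
    ∫ t in Set.Ioi (0 : ℝ), t ^ (a + 2) * ((φ t) ^ 2 + (deriv φ t) ^ 2)
      = (a + 1) * ∫ t in Set.Ioi (0 : ℝ), t ^ a * (φ t) ^ 2 := by
  have hφ₁ : DifferentiableOn ℝ φ (Ioi 0) := hφ.differentiableOn (by norm_num)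
  have hφ₂ : DifferentiableOn ℝ (deriv φ) (Ioi 0) :=
    (hφ.deriv_of_isOpen (m := 1) isOpen_Ioi (by norm_num)).differentiableOn (by norm_num)
  rw [integral_rpow_mul_sq_add_sq_eq hφ₁ hφ₂ hODE hi1 hi3 hb1,
    integral_rpow_mul_sq_eq ha.1 hφ₁ h0 hi1 hi2 hi3]

/-- For the Caffarelli–Silvestre profile `φ`,
`d₁ = ∫ t^{a+2}(φ² + (φ')²) = (a+1)·∫ t^a φ² = (a+1)·d₃`. -/
theorem stmt1 (a : ℝ) (ha : a ∈ Set.Ioo (-1 : ℝ) 1)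
    (φ : ℝ → ℝ) (hφ : ContDiffOn ℝ 2 φ (Set.Ioi 0))
    (hODE : ∀ y ∈ Set.Ioi (0 : ℝ),
      -φ y + (a / y) * deriv φ y + deriv (deriv φ) y = 0)
    (h0 : Tendsto φ (nhdsWithin 0 (Set.Ioi 0)) (nhds 1))
    (hinf : Tendsto φ atTop (nhds 0))
    (hi1 : IntegrableOn (fun t => t ^ (a + 2) * ((φ t) ^ 2 + (deriv φ t) ^ 2)) (Set.Ioi 0))
    (hi2 : IntegrableOn (fun t => t ^ a * (φ t) ^ 2) (Set.Ioi 0))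
    (hi3 : IntegrableOn (fun t => t ^ (a + 1) * φ t * deriv φ t) (Set.Ioi 0))
    (hb1 : Tendsto (fun t => t ^ (a + 1) * φ t * deriv φ t) (nhdsWithin 0 (Set.Ioi 0)) (nhds 0))
    (hb2 : Tendsto (fun t => t ^ (a + 1) * φ t * deriv φ t) atTop (nhds 0)) :
    ∫ t in Set.Ioi (0 : ℝ), t ^ (a + 2) * ((φ t) ^ 2 + (deriv φ t) ^ 2)
      = (a + 1) * ∫ t in Set.Ioi (0 : ℝ), t ^ a * (φ t) ^ 2 :=
  stmt1_general a ha φ hφ hODE h0 hi1 hi2 hi3 hb1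
end

section
/- Let θ > 1, c₁ > 0, c₂ > 0, p̄ > 1 be reals and let Φ : ℝ → [0,∞) be a function on exponents satisfying the iteration inequality Φ(θδ) ≤ (c₁(1+δ)^σ)^{2/δ}·Φ(δ) for all δ ≥ p̄ and some σ > 0. Then there is a constant C (depending only on θ, c₁, σ, p̄) such that Φ(θ^m p̄) ≤ C·Φ(p̄) for all m ∈ ℕ; in particular limsup_{δ→∞} Φ(δ) ≤ C·Φ(p̄). -/
open Set Filter

private lemma geom_bound {r : ℝ} (h0 : 0 ≤ r) (h1 : r < 1) (m : ℕ) :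
    ∑ k ∈ Finset.range m, r ^ k ≤ 1 / (1 - r) := by
  have hr1 : r ≠ 1 := ne_of_lt h1
  have heq : (r ^ m - 1) / (r - 1) = (1 - r ^ m) / (1 - r) := by
    rw [← neg_div_neg_eq]; ring_nf
  have hm : 0 ≤ r ^ m := pow_nonneg h0 m
  rw [geom_sum_eq hr1, heq, div_le_div_iff₀ (by linarith) (by linarith)]
  nlinarith


private lemma sqrt_pow' {x : ℝ} (hx : 0 ≤ x) (k : ℕ) :
    Real.sqrt (x ^ k) = Real.sqrt x ^ k := by
  induction k with
  | zero => simp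
  | succ k ih => rw [pow_succ, Real.sqrt_mul (pow_nonneg hx k), ih, pow_succ]

private lemma log_le_two_sqrt {x : ℝ} (hx : 0 ≤ x) :
    Real.log (1 + x) ≤ 2 * Real.sqrt x := by
  have hs : 0 ≤ Real.sqrt x := Real.sqrt_nonneg x
  have h1 : Real.sqrt (1 + x) ≤ 1 + Real.sqrt x := by
    have : 1 + x ≤ (1 + Real.sqrt x) ^ 2 := by
      have := Real.sq_sqrt hx
      nlinarith
    calc Real.sqrt (1 + x) ≤ Real.sqrt ((1 + Real.sqrt x) ^ 2) := Real.sqrt_le_sqrt this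
      _ = 1 + Real.sqrt x := Real.sqrt_sq (by linarith)
  have h2 : Real.log (1 + x) = 2 * Real.log (Real.sqrt (1 + x)) := by
    rw [Real.log_sqrt (by linarith : (0:ℝ) ≤ 1 + x)]; ring
  rw [h2]
  have h3 : Real.log (Real.sqrt (1 + x)) ≤ Real.log (1 + Real.sqrt x) :=
    Real.log_le_log (Real.sqrt_pos.2 (by linarith)) h1
  have h4 : Real.log (1 + Real.sqrt x) ≤ Real.sqrt x := by
    have := Real.log_le_sub_one_of_pos (x := 1 + Real.sqrt x) (by linarith)
    linarith
  linarith

/-- Abstract Moser iteration: if `Φ(θδ) ≤ (c₁(1+δ)^σ)^{2/δ} Φ(δ)` for all `δ ≥ p̄`,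
then `Φ(θ^m p̄) ≤ C·Φ(p̄)` for all `m`, with `C = C(θ, c₁, σ, p̄)`. -/
theorem stmt7 (θ c₁ σ pbar : ℝ) (hθ : 1 < θ) (hc : 0 < c₁) (hσ : 0 < σ)
    (hp : 1 < pbar) (Φ : ℝ → ℝ) (hΦpos : ∀ δ, 0 ≤ Φ δ)
    (hiter : ∀ δ, pbar ≤ δ → Φ (θ * δ) ≤ (c₁ * (1 + δ) ^ σ) ^ (2 / δ) * Φ δ) :
    ∃ C > 0, ∀ m : ℕ, Φ (θ ^ m * pbar) ≤ C * Φ pbar := by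
  have hθ0 : (0 : ℝ) < θ := by linarith
  set a : ℕ → ℝ := fun k => (c₁ * (1 + θ ^ k * pbar) ^ σ) ^ (2 / (θ ^ k * pbar)) with ha
  have hxpos : ∀ k : ℕ, 0 < θ ^ k * pbar := fun k =>
    mul_pos (pow_pos hθ0 k) (by linarith)
  have hx1 : ∀ k : ℕ, (1 : ℝ) ≤ θ ^ k * pbar := fun k => by
    have h1 : (1 : ℝ) ≤ θ ^ k := one_le_pow₀ (le_of_lt hθ)
    nlinarith
  have hapos : ∀ k, 0 < a k := fun k => by
    have : 0 < c₁ * (1 + θ ^ k * pbar) ^ σ :=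
      mul_pos hc (Real.rpow_pos_of_pos (by nlinarith [hxpos k]) σ)
    exact Real.rpow_pos_of_pos this _
  -- induction step
  have key : ∀ m : ℕ, Φ (θ ^ m * pbar) ≤ (∏ k ∈ Finset.range m, a k) * Φ pbar := by
    intro m
    induction m with
    | zero => simp
    | succ m ih =>
      have hstep := hiter (θ ^ m * pbar) (by
        have h1 : (1:ℝ) ≤ θ ^ m := one_le_pow₀ (le_of_lt hθ)
        nlinarith)
      have hrw : θ ^ (m + 1) * pbar = θ * (θ ^ m * pbar) := by ring
      rw [hrw, Finset.prod_range_succ]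
      calc Φ (θ * (θ ^ m * pbar)) ≤ a m * Φ (θ ^ m * pbar) := hstep
        _ ≤ a m * ((∏ k ∈ Finset.range m, a k) * Φ pbar) := by
            exact mul_le_mul_of_nonneg_left ih (hapos m).le
        _ = (∏ k ∈ Finset.range m, a k) * a m * Φ pbar := by ring
  -- bound on log a k
  have hr0 : (0:ℝ) ≤ 1/θ := by positivity
  have hr1 : (1:ℝ)/θ < 1 := by rw [div_lt_one hθ0]; exact hθ
  have hsq1 : 1 < Real.sqrt θ := by
    rw [show (1:ℝ) = Real.sqrt 1 by simp]
    exact Real.sqrt_lt_sqrt (by norm_num) hθ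
  have hs0 : (0:ℝ) ≤ 1/Real.sqrt θ := by positivity
  have hs1 : (1:ℝ)/Real.sqrt θ < 1 := by rw [div_lt_one (by linarith)]; exact hsq1
  set S : ℝ := 2 * |Real.log c₁| * (1/(1 - 1/θ)) + 4 * σ * (1/(1 - 1/Real.sqrt θ)) with hS
  have hlog : ∀ k : ℕ, Real.log (a k) ≤
      2 * |Real.log c₁| * (1/θ) ^ k + 4 * σ * (1/Real.sqrt θ) ^ k := by
    intro k
    set x := θ ^ k * pbar with hxdef
    have hx : 0 < x := hxpos k
    have hx1' : (1:ℝ) ≤ x := hx1 k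
    have hla : Real.log (a k) = (2 / x) * (Real.log c₁ + σ * Real.log (1 + x)) := by
      rw [ha]
      simp only
      rw [Real.log_rpow (mul_pos hc (Real.rpow_pos_of_pos (by linarith) σ)),
        Real.log_mul hc.ne' (Real.rpow_pos_of_pos (by linarith) σ).ne',
        Real.log_rpow (by linarith)]
    have hlog1x : Real.log (1 + x) ≤ 2 * Real.sqrt x := log_le_two_sqrt hx.le
    have hsx : 1 ≤ Real.sqrt x := by
      rw [show (1:ℝ) = Real.sqrt 1 by simp]; exact Real.sqrt_le_sqrt hx1'
    have h2x : 2 / x * Real.log c₁ ≤ 2 * |Real.log c₁| * (1/θ)^k := by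
      have hθk : θ ^ k ≤ x := by
        nlinarith [pow_pos hθ0 k]
      have hinv : 1 / x ≤ (1/θ)^k := by
        rw [div_pow, one_pow, div_le_div_iff₀ hx (pow_pos hθ0 k)]
        nlinarith [pow_pos hθ0 k]
      calc 2 / x * Real.log c₁ ≤ 2 / x * |Real.log c₁| := by
            exact mul_le_mul_of_nonneg_left (le_abs_self _) (by positivity)
        _ = 2 * |Real.log c₁| * (1/x) := by ring
        _ ≤ 2 * |Real.log c₁| * (1/θ)^k := by
            exact mul_le_mul_of_nonneg_left hinv (by positivity)
    have h4s : 2 / x * (σ * Real.log (1 + x)) ≤ 4 * σ * (1/Real.sqrt θ)^k := by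
      have hsqk : Real.sqrt θ ^ k ≤ Real.sqrt x := by
        have h1 : Real.sqrt (θ ^ k) ≤ Real.sqrt x := by
          apply Real.sqrt_le_sqrt
          nlinarith [pow_pos hθ0 k]
        calc Real.sqrt θ ^ k = Real.sqrt (θ ^ k) := (sqrt_pow' hθ0.le k).symm
          _ ≤ Real.sqrt x := h1
      have hstep1 : 2 / x * (σ * Real.log (1 + x)) ≤ 2 / x * (σ * (2 * Real.sqrt x)) := by
        apply mul_le_mul_of_nonneg_left _ (by positivity)
        exact mul_le_mul_of_nonneg_left hlog1x hσ.le
      have hxeq : x = Real.sqrt x * Real.sqrt x := (Real.mul_self_sqrt hx.le).symm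
      have hsxpos : 0 < Real.sqrt x := by linarith
      have hstep2 : 2 / x * (σ * (2 * Real.sqrt x)) = 4 * σ * (1 / Real.sqrt x) := by
        field_simp
        nlinarith [Real.sq_sqrt hx.le]
      have hstep3 : 1 / Real.sqrt x ≤ (1/Real.sqrt θ)^k := by
        rw [div_pow, one_pow, div_le_div_iff₀ hsxpos (pow_pos (by linarith) k)]
        nlinarith
      calc 2 / x * (σ * Real.log (1 + x)) ≤ 4 * σ * (1 / Real.sqrt x) := by
            rw [← hstep2]; exact hstep1
        _ ≤ 4 * σ * (1/Real.sqrt θ)^k := by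
            exact mul_le_mul_of_nonneg_left hstep3 (by positivity)
    rw [hla, mul_add]
    linarith
  have hsum : ∀ m : ℕ, ∑ k ∈ Finset.range m, Real.log (a k) ≤ S := by
    intro m
    calc ∑ k ∈ Finset.range m, Real.log (a k)
        ≤ ∑ k ∈ Finset.range m,
            (2 * |Real.log c₁| * (1/θ) ^ k + 4 * σ * (1/Real.sqrt θ) ^ k) :=
          Finset.sum_le_sum (fun k _ => hlog k)
      _ = 2 * |Real.log c₁| * (∑ k ∈ Finset.range m, (1/θ)^k)
            + 4 * σ * (∑ k ∈ Finset.range m, (1/Real.sqrt θ)^k) := by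
          rw [Finset.sum_add_distrib, ← Finset.mul_sum, ← Finset.mul_sum]
      _ ≤ S := by
          have g1 := geom_bound hr0 hr1 m
          have g2 := geom_bound hs0 hs1 m
          have h1 : 2 * |Real.log c₁| * (∑ k ∈ Finset.range m, (1/θ)^k)
              ≤ 2 * |Real.log c₁| * (1/(1 - 1/θ)) :=
            mul_le_mul_of_nonneg_left g1 (by positivity)
          have h2 : 4 * σ * (∑ k ∈ Finset.range m, (1/Real.sqrt θ)^k)
              ≤ 4 * σ * (1/(1 - 1/Real.sqrt θ)) :=
            mul_le_mul_of_nonneg_left g2 (by positivity)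
          linarith
  refine ⟨Real.exp S, Real.exp_pos S, fun m => ?_⟩
  have hprod : (∏ k ∈ Finset.range m, a k) ≤ Real.exp S := by
    have : (∏ k ∈ Finset.range m, a k)
        = Real.exp (∑ k ∈ Finset.range m, Real.log (a k)) := by
      rw [Real.exp_sum]
      exact Finset.prod_congr rfl (fun k _ => (Real.exp_log (hapos k)).symm)
    rw [this]
    exact Real.exp_le_exp.2 (hsum m)
  calc Φ (θ ^ m * pbar) ≤ (∏ k ∈ Finset.range m, a k) * Φ pbar := key m
    _ ≤ Real.exp S * Φ pbar := mul_le_mul_of_nonneg_right hprod (hΦpos pbar)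
end

section
/- Let a ∈ (-1,0], r₀ > 0, and on the set Ω = {(x,y) : r₀/2 < |x| < r₀, 0 < y < r₀} ⊂ ℝ^{n+1}_+ define W(x,y) = y^{-a}(y + A y²)(e^{-B|x|} - e^{-B r₀}). Then, with respect to the Euclidean metric, div(y^a ∇W) = ((1-a)·0 + (2-a)A)(e^{-B|x|} - e^{-B r₀}) + (B² - (n-1)B/|x|)·y·e^{-B|x|}; in particular, for A sufficiently large and B sufficiently large (depending on n, a, r₀), div(y^a ∇W) ≥ 0 on Ω, i.e. W is a subsolution of the degenerate operator. -/
open Real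
open scoped Topology

/-! The barrier separates variables: `W = y^{-a}(y + Ay²) · g(|x|)` with
`g(r) = e^{-Br} - e^{-Br₀}`. In `y`, `y^a ∂_y(y^{-a}(y + Ay²)) = (1 - a) + (2 - a)Ay` is affine,
so `∂_y(y^a ∂_y W) = (2 - a)A g(|x|)`; in `x`, the Laplacian of a radial function is
`g'' + (n - 1)g'/r`, which here is `(B² - (n - 1)B/|x|)e^{-B|x|}` times the `y`-factor. Both terms
are nonnegative once `A ≥ 0` and `B|x| ≥ n - 1`, and on `Ω` the latter follows from
`B ≥ 2(n + 1)/r₀`. -/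


section Radial

variable {E : Type*} [NormedAddCommGroup E] [InnerProductSpace ℝ E]

theorem hasFDerivAt_norm_of_ne_zero {x : E} (hx : x ≠ 0) :
    HasFDerivAt (fun z : E => ‖z‖) (‖x‖⁻¹ • innerSL ℝ x) x := by
  have hsq : ‖x‖ ^ 2 ≠ 0 := pow_ne_zero 2 (norm_ne_zero_iff.mpr hx)
  have h := (hasDerivAt_sqrt hsq).comp_hasFDerivAt x (hasStrictFDerivAt_norm_sq x).hasFDerivAt
  have hnorm : (sqrt ∘ fun z : E => ‖z‖ ^ 2) = fun z => ‖z‖ := by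
    funext z; exact sqrt_sq (norm_nonneg z)
  rw [hnorm, sqrt_sq (norm_nonneg x)] at h
  refine h.congr_fderiv ?_
  ext v
  simp [field]

theorem HasDerivAt.hasFDerivAt_comp_norm {φ : ℝ → ℝ} {φ' : ℝ} {x : E}
    (hφ : HasDerivAt φ φ' ‖x‖) (hx : x ≠ 0) :
    HasFDerivAt (fun z : E => φ ‖z‖) ((φ' / ‖x‖) • innerSL ℝ x) x :=
  (hφ.comp_hasFDerivAt x (hasFDerivAt_norm_of_ne_zero hx)).congr_fderiv <| by
    ext v; simp [div_eq_mul_inv, mul_assoc]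

end Radial

section Euclidean

variable {ι : Type*} [Fintype ι] [DecidableEq ι] {φ φ' : ℝ → ℝ}

theorem fderiv_comp_norm_single (hφ : ∀ r, 0 < r → HasDerivAt φ (φ' r) r)
    {z : EuclideanSpace ℝ ι} (hz : z ≠ 0) (i : ι) :
    fderiv ℝ (fun z' => φ ‖z'‖) z (EuclideanSpace.single i 1) = φ' ‖z‖ / ‖z‖ * z i := by
  rw [((hφ _ (norm_pos_iff.mpr hz)).hasFDerivAt_comp_norm hz).fderiv]
  simp [EuclideanSpace.inner_single_right]

theorem fderiv_fderiv_comp_norm_single (hφ : ∀ r, 0 < r → HasDerivAt φ (φ' r) r)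
    {φ'' : ℝ} {x : EuclideanSpace ℝ ι} (hφ' : HasDerivAt φ' φ'' ‖x‖) (hx : x ≠ 0) (i : ι) :
    fderiv ℝ (fun z => fderiv ℝ (fun z' => φ ‖z'‖) z (EuclideanSpace.single i 1)) x
        (EuclideanSpace.single i 1)
      = (φ'' / ‖x‖ ^ 2 - φ' ‖x‖ / ‖x‖ ^ 3) * x i ^ 2 + φ' ‖x‖ / ‖x‖ := by
  have hr : ‖x‖ ≠ 0 := norm_ne_zero_iff.mpr hx
  have hpartial : (fun z => fderiv ℝ (fun z' => φ ‖z'‖) z (EuclideanSpace.single i 1))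
      =ᶠ[𝓝 x] fun z => φ' ‖z‖ / ‖z‖ * z i := by
    filter_upwards [isOpen_ne.mem_nhds hx] with z hz
    exact fderiv_comp_norm_single hφ hz i
  have hquot : HasDerivAt (fun r => φ' r / r) ((φ'' * ‖x‖ - φ' ‖x‖ * 1) / ‖x‖ ^ 2) ‖x‖ :=
    hφ'.div (hasDerivAt_id _) hr
  have hprod : HasFDerivAt (fun z : EuclideanSpace ℝ ι => φ' ‖z‖ / ‖z‖ * z i) _ x :=
    (hquot.hasFDerivAt_comp_norm hx).mul (EuclideanSpace.proj (𝕜 := ℝ) i).hasFDerivAt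
  rw [hpartial.fderiv_eq, hprod.fderiv]
  simp [EuclideanSpace.inner_single_right]
  field_simp
  ring

theorem sum_fderiv_fderiv_comp_norm_single (hφ : ∀ r, 0 < r → HasDerivAt φ (φ' r) r)
    {φ'' : ℝ} {x : EuclideanSpace ℝ ι} (hφ' : HasDerivAt φ' φ'' ‖x‖) (hx : x ≠ 0) :
    ∑ i, fderiv ℝ (fun z => fderiv ℝ (fun z' => φ ‖z'‖) z (EuclideanSpace.single i 1)) x
        (EuclideanSpace.single i 1)
      = φ'' + ((Fintype.card ι : ℝ) - 1) * φ' ‖x‖ / ‖x‖ := by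
  have hr : ‖x‖ ≠ 0 := norm_ne_zero_iff.mpr hx
  simp only [fderiv_fderiv_comp_norm_single hφ hφ' hx, Finset.sum_add_distrib, ← Finset.mul_sum,
    ← EuclideanSpace.real_norm_sq_eq, Finset.sum_const, Finset.card_univ, nsmul_eq_mul]
  field_simp
  ring

end Euclidean

theorem rpow_mul_deriv_rpow_neg_mul {a : ℝ} (A C : ℝ) {t : ℝ} (ht : 0 < t) :
    t ^ a * deriv (fun s => s ^ (-a) * (s + A * s ^ 2) * C) t
      = ((1 - a) + (2 - a) * A * t) * C := by
  have hpoly : HasDerivAt (fun s : ℝ => s + A * s ^ 2) (1 + A * (2 * t)) t :=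
    ((hasDerivAt_id' t).add ((hasDerivAt_pow 2 t).const_mul A)).congr_deriv (by norm_num)
  have hpow : HasDerivAt (fun s : ℝ => s ^ (-a)) (-a * t ^ (-a - 1)) t :=
    hasDerivAt_rpow_const (Or.inl ht.ne')
  have hprod : HasDerivAt (fun s => s ^ (-a) * (s + A * s ^ 2) * C) _ t :=
    (hpow.mul hpoly).mul_const C
  rw [hprod.deriv, rpow_sub ht, rpow_neg ht.le, rpow_one]
  field_simp [(rpow_pos_of_pos ht a).ne']
  ring

theorem deriv_rpow_mul_deriv_rpow_neg_mul {a : ℝ} (A C : ℝ) {y : ℝ} (hy : 0 < y) :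
    deriv (fun t => t ^ a * deriv (fun s => s ^ (-a) * (s + A * s ^ 2) * C) t) y
      = (2 - a) * A * C := by
  have hlin : (fun t => t ^ a * deriv (fun s => s ^ (-a) * (s + A * s ^ 2) * C) t)
      =ᶠ[𝓝 y] fun t => ((1 - a) + (2 - a) * A * t) * C := by
    filter_upwards [Ioi_mem_nhds hy] with t ht
    exact rpow_mul_deriv_rpow_neg_mul A C ht
  rw [hlin.deriv_eq]
  have hline : HasDerivAt (fun t => ((1 - a) + (2 - a) * A * t) * C) ((2 - a) * A * C) y := by
    simpa using (((hasDerivAt_id' y).const_mul ((2 - a) * A)).const_add (1 - a)).mul_const C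
  exact hline.deriv

section Barrier

variable {ι : Type*} [Fintype ι] [DecidableEq ι]

/-- `div(y^a ∇u) = ∂_y(y^a ∂_y u) + y^a Δ_x u` at `(x, y)`. -/
noncomputable def weightedDiv (a : ℝ) (u : EuclideanSpace ℝ ι → ℝ → ℝ)
    (x : EuclideanSpace ℝ ι) (y : ℝ) : ℝ :=
  deriv (fun t => t ^ a * deriv (fun s => u x s) t) y
    + y ^ a * ∑ i, fderiv ℝ (fun z => fderiv ℝ (fun z' => u z' y) z (EuclideanSpace.single i 1))
        x (EuclideanSpace.single i 1)

noncomputable def hopfBarrier (a r₀ A B : ℝ) (x : EuclideanSpace ℝ ι) (y : ℝ) : ℝ :=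
  y ^ (-a) * (y + A * y ^ 2) * (exp (-B * ‖x‖) - exp (-B * r₀))

theorem weightedDiv_hopfBarrier (a r₀ A B : ℝ) {x : EuclideanSpace ℝ ι} (hx : x ≠ 0) {y : ℝ}
    (hy : 0 < y) :
    weightedDiv a (hopfBarrier a r₀ A B) x y
      = (2 - a) * A * (exp (-B * ‖x‖) - exp (-B * r₀))
        + (y + A * y ^ 2) * (B ^ 2 - ((Fintype.card ι : ℝ) - 1) * B / ‖x‖) * exp (-B * ‖x‖) := by
  set c := y ^ (-a) * (y + A * y ^ 2)
  have hexp : ∀ r, HasDerivAt (fun r => exp (-B * r)) (-B * exp (-B * r)) r := fun r => by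
    simpa [mul_comm] using ((hasDerivAt_id' r).const_mul (-B)).exp
  have hφ : ∀ r, 0 < r → HasDerivAt (fun r => c * (exp (-B * r) - exp (-B * r₀)))
      (c * (-B * exp (-B * r))) r := fun r _ =>
    ((hexp r).sub_const _).const_mul c
  have hφ' : HasDerivAt (fun r => c * (-B * exp (-B * r))) (c * (-B * (-B * exp (-B * ‖x‖))))
      ‖x‖ :=
    ((hexp ‖x‖).const_mul (-B)).const_mul c
  have hyc : y ^ a * c = y + A * y ^ 2 := by
    rw [← mul_assoc, ← rpow_add hy, add_neg_cancel, rpow_zero, one_mul]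
  unfold weightedDiv hopfBarrier
  rw [deriv_rpow_mul_deriv_rpow_neg_mul _ _ hy, sum_fderiv_fderiv_comp_norm_single hφ hφ' hx,
    ← hyc]
  ring

theorem weightedDiv_hopfBarrier_nonneg {a r₀ A B : ℝ} (ha : a ≤ 2) (hA : 0 ≤ A) (hB : 0 ≤ B)
    {x : EuclideanSpace ℝ ι} (hx : x ≠ 0) (hxr : ‖x‖ ≤ r₀)
    (hBx : (Fintype.card ι : ℝ) - 1 ≤ B * ‖x‖) {y : ℝ} (hy : 0 < y) :
    0 ≤ weightedDiv a (hopfBarrier a r₀ A B) x y := by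
  have hr : 0 < ‖x‖ := norm_pos_iff.mpr hx
  rw [weightedDiv_hopfBarrier a r₀ A B hx hy]
  have hexp : exp (-B * r₀) ≤ exp (-B * ‖x‖) := exp_le_exp.mpr (by nlinarith)
  have hlap : 0 ≤ B ^ 2 - ((Fintype.card ι : ℝ) - 1) * B / ‖x‖ := by
    rw [sub_nonneg, div_le_iff₀ hr]
    nlinarith
  have hgap := sub_nonneg.mpr hexp
  have hweight : 0 ≤ 2 - a := by linarith
  positivity

end Barrier

theorem stmt15_general (n : ℕ) (a : ℝ) (ha : a ∈ Set.Ioc (-1 : ℝ) 0)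
    (r₀ : ℝ) (hr : 0 < r₀)
    (W : ℝ → ℝ → EuclideanSpace ℝ (Fin n) → ℝ → ℝ)
    (hW : ∀ A B x y, W A B x y
      = y ^ (-a) * (y + A * y ^ 2) * (Real.exp (-B * ‖x‖) - Real.exp (-B * r₀))) :
    (∀ A B (x : EuclideanSpace ℝ (Fin n)) (y : ℝ),
      r₀ / 2 < ‖x‖ → ‖x‖ < r₀ → 0 < y → y < r₀ →
      deriv (fun t => t ^ a * deriv (fun s => W A B x s) t) y
        + y ^ a * (∑ i : Fin n,
            fderiv ℝ (fun z => fderiv ℝ (fun z' => W A B z' y) z (EuclideanSpace.single i 1))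
              x (EuclideanSpace.single i 1))
      = (2 - a) * A * (Real.exp (-B * ‖x‖) - Real.exp (-B * r₀))
        + (y + A * y ^ 2) * (B ^ 2 - ((n : ℝ) - 1) * B / ‖x‖) * Real.exp (-B * ‖x‖)) ∧
    (∃ A₀ B₀ : ℝ, 0 < A₀ ∧ 0 < B₀ ∧
      ∀ A B (x : EuclideanSpace ℝ (Fin n)) (y : ℝ), A₀ ≤ A → B₀ ≤ B →
        r₀ / 2 < ‖x‖ → ‖x‖ < r₀ → 0 < y → y < r₀ →
        0 ≤ deriv (fun t => t ^ a * deriv (fun s => W A B x s) t) y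
          + y ^ a * (∑ i : Fin n,
              fderiv ℝ (fun z => fderiv ℝ (fun z' => W A B z' y) z (EuclideanSpace.single i 1))
                x (EuclideanSpace.single i 1))) := by
  obtain rfl : W = hopfBarrier a r₀ := by funext A B x y; exact hW A B x y
  have hx0 {x : EuclideanSpace ℝ (Fin n)} (hx : r₀ / 2 < ‖x‖) : x ≠ 0 :=
    norm_pos_iff.mp (by linarith)
  refine ⟨fun A B x y hx _ hy _ => ?_, 1, 2 * (n + 1) / r₀, one_pos, by positivity,
    fun A B x y hA hB hx hxr hy _ => ?_⟩
  · have h := weightedDiv_hopfBarrier a r₀ A B (hx0 hx) hy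
    rwa [Fintype.card_fin] at h
  · have hB0 : 0 ≤ B := (by positivity : (0 : ℝ) ≤ 2 * (n + 1) / r₀).trans hB
    have hBx : (n : ℝ) - 1 ≤ B * ‖x‖ := calc
      (n : ℝ) - 1 ≤ 2 * (n + 1) / r₀ * (r₀ / 2) := by field_simp; linarith
      _ ≤ B * ‖x‖ := mul_le_mul hB hx.le (by positivity) hB0
    refine weightedDiv_hopfBarrier_nonneg (by linarith [ha.2]) (by linarith) hB0 (hx0 hx) hxr.le
      ?_ hy
    rwa [Fintype.card_fin]

/-- Barrier computation for the Hopf-type lemma in the flat model: for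
`W = y^{-a}(y+Ay²)(e^{-B|x|}-e^{-Br₀})` on
`Ω = {r₀/2 < |x| < r₀, 0 < y < r₀}` and `a ∈ (-1,0]`, the degenerate divergence
`div(y^a∇W) = ∂_y(y^a∂_yW) + y^aΔ_xW` equals
`(2-a)A(e^{-B|x|}-e^{-Br₀}) + (y+Ay²)(B²-(n-1)B/|x|)e^{-B|x|}`; in particular it
is `≥ 0` on `Ω` for `A, B` sufficiently large, i.e. `W` is a subsolution. -/
theorem stmt15 (n : ℕ) (hn : 1 ≤ n) (a : ℝ) (ha : a ∈ Set.Ioc (-1 : ℝ) 0)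
    (r₀ : ℝ) (hr : 0 < r₀)
    (W : ℝ → ℝ → EuclideanSpace ℝ (Fin n) → ℝ → ℝ)
    (hW : ∀ A B x y, W A B x y
      = y ^ (-a) * (y + A * y ^ 2) * (Real.exp (-B * ‖x‖) - Real.exp (-B * r₀))) :
    (∀ A B (x : EuclideanSpace ℝ (Fin n)) (y : ℝ),
      r₀ / 2 < ‖x‖ → ‖x‖ < r₀ → 0 < y → y < r₀ →
      deriv (fun t => t ^ a * deriv (fun s => W A B x s) t) y
        + y ^ a * (∑ i : Fin n,
            fderiv ℝ (fun z => fderiv ℝ (fun z' => W A B z' y) z (EuclideanSpace.single i 1))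
              x (EuclideanSpace.single i 1))
      = (2 - a) * A * (Real.exp (-B * ‖x‖) - Real.exp (-B * r₀))
        + (y + A * y ^ 2) * (B ^ 2 - ((n : ℝ) - 1) * B / ‖x‖) * Real.exp (-B * ‖x‖)) ∧
    (∃ A₀ B₀ : ℝ, 0 < A₀ ∧ 0 < B₀ ∧
      ∀ A B (x : EuclideanSpace ℝ (Fin n)) (y : ℝ), A₀ ≤ A → B₀ ≤ B →
        r₀ / 2 < ‖x‖ → ‖x‖ < r₀ → 0 < y → y < r₀ →
        0 ≤ deriv (fun t => t ^ a * deriv (fun s => W A B x s) t) y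
          + y ^ a * (∑ i : Fin n,
              fderiv ℝ (fun z => fderiv ℝ (fun z' => W A B z' y) z (EuclideanSpace.single i 1))
                x (EuclideanSpace.single i 1))) :=
  stmt15_general n a ha r₀ hr W hW
end
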